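/- Let f: D^n → A (n ≥ 3) be locally strategy-proof, and define g: D^{n-1} → A by g(P_1, P_3, ..., P_n) = f(P_1, P_1, P_3, ..., P_n) (cloning voters 1 and 2). Then g is locally strategy-proof; moreover, if f is unanimous then g is unanimous, and if f is tops-only then g is tops-only. -/
import Mathlib


open Relation

/-- A preference is a ranking: a bijection from alternatives to ranks (0 = best). -/
abbrev Pref (A : Type*) [Fintype A] := A ≃ Fin (Fintype.card A)

namespace Pref

variable {A : Type*} [Fintype A]

/-- The rank (as a natural number, 0 = best) of alternative `a` in preference `P`. -/
def rk (P : Pref A) (a : A) : ℕ := (P a : ℕ)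

/-- The top-ranked alternative of `P`. -/
noncomputable def top [Nonempty A] (P : Pref A) : A := P.symm ⟨0, Fintype.card_pos⟩

/-- `a` is strictly preferred to `b` under `P`. -/
def SPrefers (P : Pref A) (a b : A) : Prop := rk P a < rk P b

/-- Two preferences are adjacent if they differ by one swap of consecutively
ranked alternatives. -/
def Adjacent (P P' : Pref A) : Prop :=
  ∃ a b : A, rk P a = rk P b + 1 ∧ rk P' a = rk P b ∧ rk P' b = rk P a ∧
    ∀ c : A, c ≠ a → c ≠ b → rk P c = rk P' c

end Pref

open Pref

variable {A : Type*} [Fintype A] [Nonempty A]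

/-- One step between members of the domain `D` along adjacent preferences. -/
def StepRel (D : Set (Pref A)) (P Q : Pref A) : Prop := P ∈ D ∧ Q ∈ D ∧ Adjacent P Q

/-- The domain `D` is connected: any two members are joined by a path of
adjacent preferences inside `D`. -/
def DConnected (D : Set (Pref A)) : Prop :=
  ∀ P ∈ D, ∀ Q ∈ D, ReflTransGen (StepRel D) P Q

/-- One step inside `D` along adjacent preferences keeping the same top. -/
def TStepRel (D : Set (Pref A)) (P Q : Pref A) : Prop :=
  StepRel D P Q ∧ Pref.top P = Pref.top Q

/-- The top-connected closure of `P` in `D`. -/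
def TCC (D : Set (Pref A)) (P : Pref A) : Set (Pref A) :=
  {Q | ReflTransGen (TStepRel D) P Q}

/-- Neighbours of a subset `S` inside the domain `D`. -/
def Nbr (D S : Set (Pref A)) : Set (Pref A) :=
  {Q | Q ∈ D ∧ Q ∉ S ∧ ∃ P ∈ S, Adjacent P Q}

/-- `D` is connected with two distinct neighbours. -/
def CDN (D : Set (Pref A)) : Prop :=
  DConnected D ∧
    ∀ P ∈ D, ∃ Q ∈ Nbr D (TCC D P), ∃ R ∈ Nbr D (TCC D P), Pref.top Q ≠ Pref.top R

/-- Every alternative is top-ranked in some preference of `D`. -/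
def MinimallyRich (D : Set (Pref A)) : Prop := ∀ a : A, ∃ P ∈ D, Pref.top P = a

/-- The edge relation of the induced graph `G(D)` on alternatives. -/
def EdgeD (D : Set (Pref A)) (a b : A) : Prop :=
  ∃ P ∈ D, ∃ P' ∈ D, Adjacent P P' ∧
    Pref.top P = a ∧ Pref.top P' = b ∧ rk P b = 1 ∧ rk P' a = 1

/-- `v 0, v 1, …, v (k-1)` is a path in the induced graph `G(D)`. -/
def IsPathD (D : Set (Pref A)) (k : ℕ) (v : ℕ → A) : Prop :=
  (∀ i j, i < k → j < k → v i = v j → i = j) ∧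
    ∀ i, i + 1 < k → EdgeD D (v i) (v (i + 1))

/-- Connected component of `P` in `D`. -/
def Component (D : Set (Pref A)) (P : Pref A) : Set (Pref A) :=
  {Q | Q ∈ D ∧ ReflTransGen (StepRel D) P Q}

section SCF

variable {n : ℕ} (D : Set (Pref A))

/-- Unanimity. -/
def Unanimous (f : (Fin n → D) → A) : Prop :=
  ∀ (P : Fin n → D) (a : A), (∀ i, Pref.top (P i : Pref A) = a) → f P = a

/-- Local strategy-proofness. -/
def LocallySP (f : (Fin n → D) → A) : Prop :=
  ∀ (P : Fin n → D) (i : Fin n) (Q : D), Adjacent (P i : Pref A) (Q : Pref A) →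
    ¬ SPrefers (P i : Pref A) (f (Function.update P i Q)) (f P)

/-- (Global) strategy-proofness. -/
def StrategyProof (f : (Fin n → D) → A) : Prop :=
  ∀ (P : Fin n → D) (i : Fin n) (Q : D),
    ¬ SPrefers (P i : Pref A) (f (Function.update P i Q)) (f P)

/-- Tops-onlyness. -/
def TopsOnly (f : (Fin n → D) → A) : Prop :=
  ∀ P P' : Fin n → D,
    (∀ i, Pref.top (P i : Pref A) = Pref.top (P' i : Pref A)) → f P = f P'

/-- Dictatorship. -/
def Dictatorial (f : (Fin n → D) → A) : Prop :=
  ∃ i : Fin n, ∀ P : Fin n → D, f P = Pref.top (P i : Pref A)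

/-- Voter `i` is decisive over `a`. -/
def Decisive (f : (Fin n → D) → A) (i : Fin n) (a : A) : Prop :=
  ∀ P : Fin n → D, Pref.top (P i : Pref A) = a → f P = a

end SCF

/-- Lemma 6 (cloning): the `(n-1)`-voter rule obtained from `f` by cloning
voters 1 and 2 is locally strategy-proof, and inherits unanimity and
tops-onlyness. -/
theorem stmt13 {A : Type*} [Fintype A] [Nonempty A]
    (D : Set (Pref A)) (n : ℕ) (hn : 3 ≤ n)
    (f : (Fin n → D) → A) (hlsp : LocallySP D f)
    (g : (Fin (n - 1) → D) → A)
    (hg : ∀ Q : Fin (n - 1) → D,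
      g Q = f (fun i : Fin n =>
        if h : (i : ℕ) ≤ 1 then Q ⟨0, by omega⟩
        else Q ⟨(i : ℕ) - 1, by have := i.isLt; omega⟩)) :
    LocallySP D g ∧ (Unanimous D f → Unanimous D g) ∧
      (TopsOnly D f → TopsOnly D g) := by
  classical
  have hn' : 2 < n := hn
  have hcard : 0 < n - 1 := by omega
  -- the cloned profile
  set e : (Fin (n - 1) → D) → (Fin n → D) := fun Q i =>
    if h : (i : ℕ) ≤ 1 then Q ⟨0, by omega⟩
    else Q ⟨(i : ℕ) - 1, by have := i.isLt; omega⟩ with he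
  have hg' : ∀ Q, g Q = f (e Q) := hg
  have i0 : Fin n := ⟨0, by omega⟩
  refine ⟨?_, ?_, ?_⟩
  · -- Local strategy-proofness
    intro Q j R hadj
    by_cases hj : (j : ℕ) = 0
    · -- clone voter case
      have hj0 : j = ⟨0, hcard⟩ := Fin.ext hj
      subst hj0
      have h0n : (0 : ℕ) < n := by omega
      have h1n : (1 : ℕ) < n := by omega
      set P0 : Fin n → D := Function.update (e Q) ⟨0, h0n⟩ R with hP0
      set P1 : Fin n → D := Function.update P0 ⟨1, h1n⟩ R with hP1
      have heq0 : (e Q) ⟨0, h0n⟩ = Q ⟨0, hcard⟩ := by simp [he]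
      have heq1 : P0 ⟨1, h1n⟩ = Q ⟨0, hcard⟩ := by
        simp [hP0, Function.update_apply, he, Fin.ext_iff]
      have step1 := hlsp (e Q) ⟨0, h0n⟩ R (by rw [heq0]; exact hadj)
      have step2 := hlsp P0 ⟨1, h1n⟩ R (by rw [heq1]; exact hadj)
      rw [heq0] at step1
      rw [heq1] at step2
      have hprof : e (Function.update Q ⟨0, hcard⟩ R) = P1 := by
        funext i
        rcases i with ⟨iv, hiv⟩
        simp only [he, hP1, hP0, Function.update_apply, Fin.ext_iff]
        by_cases h1 : iv ≤ 1
        · interval_cases iv <;> simp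
        · have h2 : ¬ iv = 1 := by omega
          have h3 : ¬ iv = 0 := by omega
          have h4 : ¬ iv - 1 = 0 := by omega
          simp [h1, h2, h3, h4]
      rw [hg', hg', hprof]
      rw [← hP0] at step1
      rw [← hP1] at step2
      simp only [SPrefers] at step1 step2 ⊢
      omega
    · -- independent voter case
      have hjlt : (j : ℕ) + 1 < n := by have := j.isLt; omega
      set j' : Fin n := ⟨(j : ℕ) + 1, hjlt⟩ with hj'
      have heqj : (e Q) j' = Q j := by
        simp only [he, hj']
        rw [dif_neg (by omega)]
        congr 1
      have hprof : e (Function.update Q j R) = Function.update (e Q) j' R := by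
        funext i
        rcases i with ⟨iv, hiv⟩
        simp only [he, hj', Function.update_apply, Fin.ext_iff]
        by_cases h1 : iv ≤ 1
        · rw [dif_pos h1, dif_pos h1]
          have : ¬ iv = (j : ℕ) + 1 := by omega
          simp [this, Ne.symm hj]
        · rw [dif_neg h1, dif_neg h1]
          by_cases h2 : iv = (j : ℕ) + 1
          · simp [h2]
          · have : ¬ iv - 1 = (j : ℕ) := by omega
            simp [h2, this]
      have step := hlsp (e Q) j' R (by rw [heqj]; exact hadj)
      rw [heqj] at step
      rw [hg', hg', hprof]
      exact step
  · -- Unanimity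
    intro hu Q a htop
    rw [hg']
    apply hu
    intro i
    simp only [he]
    split <;> exact htop _
  · -- Tops-only
    intro ht Q Q' h
    rw [hg', hg']
    apply ht
    intro i
    simp only [he]
    split <;> exact h _
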